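/- Let $\beta$ be a one-dimensional fractional Brownian motion with Hurst parameter $H = 3/4$. Then there is a constant $c > 0$ such that for all $n > 1$, $\mathbf{E}\big| \frac{1}{n} \sum_{k=0}^{n-1} (|\beta_{k+1} - \beta_k|^2 - 1) \big|^2 \leq c \cdot \log(n)/n$. -/

import Mathlib

/-!
The increments `X k = β (k + 1) - β k` form a stationary centered Gaussian sequence with unit
variance and autocovariance `ρ m = ((m + 1)^{3/2} + (m - 1)^{3/2} - 2 m^{3/2}) / 2`. For a centered
Gaussian pair, `E[X²Y²] = E[X²] E[Y²] + 2 E[XY]²` (polarize `E Z⁴ = 3 (E Z²)²`), so the second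
moment in question is `(2 / n²) ∑_{j,k<n} ρ(|j - k|)²`. Convexity of `x^{3/2}` gives
`0 ≤ ρ m ≤ (3/4) (√(m + 1) - √(m - 1))`, hence `ρ m ² ≤ (9/4) / (m + 1)`, and the harmonic sum
bounds the second moment by `9 (1 + log n) / n`.
-/

open MeasureTheory ProbabilityTheory Filter

/-- A process `β : ℝ → Ω → ℝ` is a (one-dimensional) fractional Brownian motion with Hurst
parameter `H` under `P` if it is a centered Gaussian process (every finite linear combination
of its values is a centered Gaussian random variable) with covariance
`E(β_s β_t) = (|s|^{2H} + |t|^{2H} - |s-t|^{2H})/2`. -/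
def IsFBM {Ω : Type*} [MeasurableSpace Ω] (P : Measure Ω) (H : ℝ) (β : ℝ → Ω → ℝ) : Prop :=
  (∀ t, Measurable (β t)) ∧
  (∀ (n : ℕ) (c : Fin n → ℝ) (t : Fin n → ℝ), ∃ v : NNReal,
    P.map (fun ω => ∑ i, c i * β (t i) ω) = gaussianReal 0 v) ∧
  (∀ s t : ℝ, ∫ ω, β s ω * β t ω ∂P =
    (|s| ^ (2 * H) + |t| ^ (2 * H) - |s - t| ^ (2 * H)) / 2)

open Real
open scoped NNReal

section GaussianMoments

variable {Ω : Type*} [MeasurableSpace Ω] {P : Measure Ω} {Z : Ω → ℝ} {μ : ℝ} {v : ℝ≥0}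

lemma integral_sq_gaussianReal : ∫ x, x ^ 2 ∂gaussianReal 0 v = v := by
  simpa [variance_eq_integral measurable_id'.aemeasurable] using
    variance_fun_id_gaussianReal (μ := 0) (v := v)

lemma integral_pow_four_gaussianReal : ∫ x, x ^ 4 ∂gaussianReal 0 v = 3 * (v : ℝ) ^ 2 := by
  have hmgf : iteratedDeriv 4 (mgf (fun x ↦ x) (gaussianReal 0 v)) 0 =
      ∫ x, x ^ 4 ∂gaussianReal 0 v := by
    rw [iteratedDeriv_mgf_zero] <;> simp
  rw [← hmgf, mgf_fun_id_gaussianReal]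
  set g : ℝ → ℝ := fun t ↦ rexp (v * t ^ 2 / 2) with hg
  have hg' (t : ℝ) : HasDerivAt g (v * t * g t) t := by
    convert (((hasDerivAt_pow 2 t).const_mul (v : ℝ)).div_const 2).exp using 1
    simp [hg]; ring
  -- every derivative of `g` is a polynomial times `g`
  have deriv_mul_g (p p' q : ℝ → ℝ) (hp : ∀ t, HasDerivAt p (p' t) t)
      (hq : ∀ t, p' t + v * t * p t = q t) : deriv (fun t ↦ p t * g t) = fun t ↦ q t * g t := by
    ext t
    rw [((hp t).fun_mul (hg' t)).deriv, ← hq]; ring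
  have hodd (a b t : ℝ) : HasDerivAt (fun t ↦ a * t + b * t ^ 3) (a + 3 * b * t ^ 2) t := by
    refine (((hasDerivAt_id' t).const_mul a).fun_add
      ((hasDerivAt_pow 3 t).const_mul b)).congr_deriv ?_
    norm_num; ring
  have heven (a b t : ℝ) : HasDerivAt (fun t ↦ a + b * t ^ 2) (2 * b * t) t := by
    refine (((hasDerivAt_pow 2 t).const_mul b).const_add a).congr_deriv ?_
    norm_num; ring
  have d1 : deriv (fun t ↦ 1 * g t) = fun t ↦ (v * t + 0 * t ^ 3) * g t :=
    deriv_mul_g _ (fun _ ↦ 0) _ (fun t ↦ hasDerivAt_const t 1) (fun t ↦ by ring)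
  have d2 : deriv (fun t ↦ (v * t + 0 * t ^ 3) * g t) = fun t ↦ (v + v ^ 2 * t ^ 2) * g t :=
    deriv_mul_g _ _ _ (hodd _ _) (fun t ↦ by ring)
  have d3 : deriv (fun t ↦ (v + v ^ 2 * t ^ 2) * g t) =
      fun t ↦ (3 * v ^ 2 * t + v ^ 3 * t ^ 3) * g t :=
    deriv_mul_g _ _ _ (heven _ _) (fun t ↦ by ring)
  have d4 : deriv (fun t ↦ (3 * v ^ 2 * t + v ^ 3 * t ^ 3) * g t) =
      fun t ↦ (3 * v ^ 2 + 6 * v ^ 3 * t ^ 2 + v ^ 4 * t ^ 4) * g t :=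
    deriv_mul_g _ _ _ (hodd _ _) (fun t ↦ by ring)
  have hg0 : (fun t : ℝ ↦ rexp (0 * t + v * t ^ 2 / 2)) = fun t ↦ 1 * g t := by
    ext t; simp [hg]
  rw [hg0, iteratedDeriv_succ', iteratedDeriv_succ', iteratedDeriv_succ', iteratedDeriv_one,
    d1, d2, d3, d4]
  simp [hg]

lemma ProbabilityTheory.HasLaw.integrable_pow_gaussianReal
    (hZ : HasLaw Z (gaussianReal μ v) P) (k : ℕ) : Integrable (fun ω ↦ Z ω ^ k) P := by
  have h : Integrable (fun x : ℝ ↦ x ^ k) (gaussianReal μ v) := by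
    refine (integrable_norm_iff (by fun_prop)).1 ?_
    simpa [norm_pow] using (memLp_id_gaussianReal (μ := μ) (v := v) k).integrable_norm_pow'
  rw [← hZ.map_eq] at h
  exact (integrable_map_measure (f := Z) (g := fun x : ℝ ↦ x ^ k) (by fun_prop)
    hZ.aemeasurable).1 h

lemma ProbabilityTheory.HasLaw.integral_pow_four_eq_three_mul_sq
    (hZ : HasLaw Z (gaussianReal 0 v) P) : ∫ ω, Z ω ^ 4 ∂P = 3 * (∫ ω, Z ω ^ 2 ∂P) ^ 2 := by
  have hmoment (k : ℕ) : ∫ ω, Z ω ^ k ∂P = ∫ x, x ^ k ∂gaussianReal 0 v := by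
    rw [← hZ.map_eq, integral_map hZ.aemeasurable (by fun_prop)]
  rw [hmoment, hmoment, integral_pow_four_gaussianReal, integral_sq_gaussianReal]

end GaussianMoments

section GaussianPair

variable {Ω : Type*} [MeasurableSpace Ω] {P : Measure Ω}

def IsCenteredGaussianPair (X Y : Ω → ℝ) (P : Measure Ω) : Prop :=
  ∀ a b : ℝ, ∃ v : ℝ≥0, HasLaw (fun ω ↦ a * X ω + b * Y ω) (gaussianReal 0 v) P

namespace IsCenteredGaussianPair

variable {X Y : Ω → ℝ}

lemma exists_hasLaw_fst (h : IsCenteredGaussianPair X Y P) :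
    ∃ v : ℝ≥0, HasLaw X (gaussianReal 0 v) P := by
  simpa using h 1 0

lemma exists_hasLaw_snd (h : IsCenteredGaussianPair X Y P) :
    ∃ v : ℝ≥0, HasLaw Y (gaussianReal 0 v) P := by
  simpa using h 0 1

lemma exists_hasLaw_add (h : IsCenteredGaussianPair X Y P) :
    ∃ v : ℝ≥0, HasLaw (fun ω ↦ X ω + Y ω) (gaussianReal 0 v) P := by
  simpa using h 1 1

lemma exists_hasLaw_sub (h : IsCenteredGaussianPair X Y P) :
    ∃ v : ℝ≥0, HasLaw (fun ω ↦ X ω - Y ω) (gaussianReal 0 v) P := by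
  simpa [sub_eq_add_neg] using h 1 (-1)

lemma integrable_mul (h : IsCenteredGaussianPair X Y P) :
    Integrable (fun ω ↦ X ω * Y ω) P := by
  obtain ⟨_, hX⟩ := h.exists_hasLaw_fst
  obtain ⟨_, hY⟩ := h.exists_hasLaw_snd
  obtain ⟨_, hS⟩ := h.exists_hasLaw_add
  have := hX.integrable_pow_gaussianReal 2
  have := hY.integrable_pow_gaussianReal 2
  have := hS.integrable_pow_gaussianReal 2
  refine (show Integrable (fun ω ↦ ((X ω + Y ω) ^ 2 - X ω ^ 2 - Y ω ^ 2) / 2) P by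
    fun_prop).congr (ae_of_all _ fun ω ↦ ?_)
  ring

lemma integrable_sq_mul_sq (h : IsCenteredGaussianPair X Y P) :
    Integrable (fun ω ↦ X ω ^ 2 * Y ω ^ 2) P := by
  obtain ⟨_, hX⟩ := h.exists_hasLaw_fst
  obtain ⟨_, hY⟩ := h.exists_hasLaw_snd
  obtain ⟨_, hS⟩ := h.exists_hasLaw_add
  obtain ⟨_, hD⟩ := h.exists_hasLaw_sub
  have := hX.integrable_pow_gaussianReal 4
  have := hY.integrable_pow_gaussianReal 4
  have := hS.integrable_pow_gaussianReal 4
  have := hD.integrable_pow_gaussianReal 4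
  refine (show Integrable (fun ω ↦ ((X ω + Y ω) ^ 4 + (X ω - Y ω) ^ 4
    - 2 * X ω ^ 4 - 2 * Y ω ^ 4) / 12) P by fun_prop).congr (ae_of_all _ fun ω ↦ ?_)
  ring

-- Isserlis' theorem in degree four.
lemma integral_sq_mul_sq (h : IsCenteredGaussianPair X Y P) :
    ∫ ω, X ω ^ 2 * Y ω ^ 2 ∂P =
      (∫ ω, X ω ^ 2 ∂P) * (∫ ω, Y ω ^ 2 ∂P) + 2 * (∫ ω, X ω * Y ω ∂P) ^ 2 := by
  obtain ⟨_, hX⟩ := h.exists_hasLaw_fst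
  obtain ⟨_, hY⟩ := h.exists_hasLaw_snd
  obtain ⟨_, hS⟩ := h.exists_hasLaw_add
  obtain ⟨_, hD⟩ := h.exists_hasLaw_sub
  have := hX.integrable_pow_gaussianReal 2
  have := hY.integrable_pow_gaussianReal 2
  have := hX.integrable_pow_gaussianReal 4
  have := hY.integrable_pow_gaussianReal 4
  have := hS.integrable_pow_gaussianReal 4
  have := hD.integrable_pow_gaussianReal 4
  have := h.integrable_mul
  have hS2 : ∫ ω, (X ω + Y ω) ^ 2 ∂P =
      ∫ ω, X ω ^ 2 ∂P + 2 * ∫ ω, X ω * Y ω ∂P + ∫ ω, Y ω ^ 2 ∂P := by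
    simp_rw [add_sq, mul_assoc]
    rw [integral_add (by fun_prop) (by fun_prop), integral_add (by fun_prop) (by fun_prop),
      integral_const_mul]
  have hD2 : ∫ ω, (X ω - Y ω) ^ 2 ∂P =
      ∫ ω, X ω ^ 2 ∂P - 2 * ∫ ω, X ω * Y ω ∂P + ∫ ω, Y ω ^ 2 ∂P := by
    simp_rw [sub_sq, mul_assoc]
    rw [integral_add (by fun_prop) (by fun_prop), integral_sub (by fun_prop) (by fun_prop),
      integral_const_mul]
  -- polarization: `x²y²` is a combination of fourth powers of `x`, `y`, `x + y`, `x - y`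
  calc ∫ ω, X ω ^ 2 * Y ω ^ 2 ∂P
      = ∫ ω, ((X ω + Y ω) ^ 4 + (X ω - Y ω) ^ 4 - 2 * X ω ^ 4 - 2 * Y ω ^ 4) / 12 ∂P := by
        congr 1; ext ω; ring
    _ = (∫ ω, (X ω + Y ω) ^ 4 ∂P + ∫ ω, (X ω - Y ω) ^ 4 ∂P
          - 2 * ∫ ω, X ω ^ 4 ∂P - 2 * ∫ ω, Y ω ^ 4 ∂P) / 12 := by
        rw [integral_div, integral_sub (by fun_prop) (by fun_prop),
          integral_sub (by fun_prop) (by fun_prop), integral_add (by fun_prop) (by fun_prop),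
          integral_const_mul, integral_const_mul]
    _ = _ := by
        rw [hS.integral_pow_four_eq_three_mul_sq, hD.integral_pow_four_eq_three_mul_sq,
          hX.integral_pow_four_eq_three_mul_sq, hY.integral_pow_four_eq_three_mul_sq, hS2, hD2]
        ring

lemma integrable_sq_sub_mul_sq_sub [IsFiniteMeasure P] (h : IsCenteredGaussianPair X Y P)
    (a b : ℝ) : Integrable (fun ω ↦ (X ω ^ 2 - a) * (Y ω ^ 2 - b)) P := by
  obtain ⟨_, hX⟩ := h.exists_hasLaw_fst
  obtain ⟨_, hY⟩ := h.exists_hasLaw_snd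
  have := h.integrable_sq_mul_sq
  have := hX.integrable_pow_gaussianReal 2
  have := hY.integrable_pow_gaussianReal 2
  refine (show Integrable (fun ω ↦ X ω ^ 2 * Y ω ^ 2 - b * X ω ^ 2 - a * Y ω ^ 2 + a * b) P by
    fun_prop).congr (ae_of_all _ fun ω ↦ ?_)
  ring

lemma integral_sq_sub_mul_sq_sub [IsProbabilityMeasure P] (h : IsCenteredGaussianPair X Y P) :
    ∫ ω, (X ω ^ 2 - ∫ ω, X ω ^ 2 ∂P) * (Y ω ^ 2 - ∫ ω, Y ω ^ 2 ∂P) ∂P =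
      2 * (∫ ω, X ω * Y ω ∂P) ^ 2 := by
  obtain ⟨_, hX⟩ := h.exists_hasLaw_fst
  obtain ⟨_, hY⟩ := h.exists_hasLaw_snd
  have := h.integrable_sq_mul_sq
  have := hX.integrable_pow_gaussianReal 2
  have := hY.integrable_pow_gaussianReal 2
  set p := ∫ ω, X ω ^ 2 ∂P
  set q := ∫ ω, Y ω ^ 2 ∂P
  calc ∫ ω, (X ω ^ 2 - p) * (Y ω ^ 2 - q) ∂P
      = ∫ ω, X ω ^ 2 * Y ω ^ 2 - q * X ω ^ 2 - p * Y ω ^ 2 + p * q ∂P := by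
        congr 1; ext ω; ring
    _ = ∫ ω, X ω ^ 2 * Y ω ^ 2 ∂P - q * p - p * q + p * q := by
        rw [integral_add (by fun_prop) (by fun_prop), integral_sub (by fun_prop) (by fun_prop),
          integral_sub (by fun_prop) (by fun_prop), integral_const_mul, integral_const_mul,
          integral_const, probReal_univ, one_smul]
    _ = 2 * (∫ ω, X ω * Y ω ∂P) ^ 2 := by
        rw [h.integral_sq_mul_sq]
        ring

end IsCenteredGaussianPair

end GaussianPair

lemma Finset.sum_comp_le_sum_of_injOn {ι κ N : Type*} [AddCommMonoid N] [Preorder N]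
    [AddLeftMono N] {s : Finset ι} {t : Finset κ} {g : ι → κ} {f : κ → N}
    (hg : Set.InjOn g s) (hst : Set.MapsTo g s t) (hf : ∀ x ∈ t, 0 ≤ f x) :
    ∑ i ∈ s, f (g i) ≤ ∑ x ∈ t, f x := by
  classical
  rw [← Finset.sum_image hg]
  exact Finset.sum_le_sum_of_subset_of_nonneg (Finset.image_subset_iff.2 hst)
    fun x hx _ ↦ hf x hx

lemma Finset.sum_range_natDist_le {N : Type*} [AddCommMonoid N] [Preorder N] [AddLeftMono N]
    (F : ℕ → N) (hF : ∀ m, 0 ≤ F m) {n j : ℕ} (hj : j < n) :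
    ∑ k ∈ Finset.range n, F (Nat.dist j k) ≤ 2 • ∑ m ∈ Finset.range n, F m := by
  rw [← Finset.sum_filter_add_sum_filter_not (Finset.range n) (· ≤ j), two_nsmul]
  -- `Nat.dist j` is injective on each side of `j`
  refine add_le_add (Finset.sum_comp_le_sum_of_injOn ?_ ?_ fun m _ ↦ hF m)
    (Finset.sum_comp_le_sum_of_injOn ?_ ?_ fun m _ ↦ hF m) <;>
  · simp only [Set.InjOn, Set.MapsTo, Finset.coe_filter, Finset.coe_range, Finset.mem_range,
      Set.mem_Iio, Set.mem_ofPred_eq, Nat.dist]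
    omega

lemma integral_sq_finsetSum {Ω ι : Type*} [MeasurableSpace Ω] {P : Measure Ω} (s : Finset ι)
    {f : ι → Ω → ℝ} (hf : ∀ i ∈ s, ∀ j ∈ s, Integrable (fun ω ↦ f i ω * f j ω) P) :
    ∫ ω, (∑ i ∈ s, f i ω) ^ 2 ∂P = ∑ i ∈ s, ∑ j ∈ s, ∫ ω, f i ω * f j ω ∂P := by
  simp_rw [sq, Finset.sum_mul_sum]
  rw [integral_finsetSum _ fun i hi ↦ integrable_finsetSum _ fun j hj ↦ hf i hi j hj]
  exact Finset.sum_congr rfl fun i hi ↦ integral_finsetSum _ fun j hj ↦ hf i hi j hj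

section Autocovariance

-- The autocovariance of fractional Gaussian noise `fgn`, the unit increments of a fractional
-- Brownian motion with Hurst index `H`.
noncomputable def fgnCov (H d : ℝ) : ℝ :=
  (|d + 1| ^ (2 * H) + |d - 1| ^ (2 * H) - 2 * |d| ^ (2 * H)) / 2

lemma fgnCov_neg (H d : ℝ) : fgnCov H (-d) = fgnCov H d := by
  rw [fgnCov, fgnCov, abs_neg, show -d + 1 = -(d - 1) by ring, show -d - 1 = -(d + 1) by ring,
    abs_neg, abs_neg]
  ring

lemma fgnCov_abs (H d : ℝ) : fgnCov H |d| = fgnCov H d := by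
  rcases abs_choice d with h | h <;> rw [h]
  exact fgnCov_neg H d

lemma fgnCov_zero {H : ℝ} (hH : H ≠ 0) : fgnCov H 0 = 1 := by
  simp [fgnCov, hH]

lemma Nat.cast_dist_eq_abs (j k : ℕ) : (Nat.dist j k : ℝ) = |(j : ℝ) - k| := by
  rcases le_total j k with h | h
  · rw [Nat.dist_eq_sub_of_le h, Nat.cast_sub h, abs_sub_comm,
      abs_of_nonneg (sub_nonneg.2 (Nat.cast_le.2 h))]
  · rw [Nat.dist_eq_sub_of_le_right h, Nat.cast_sub h,
      abs_of_nonneg (sub_nonneg.2 (Nat.cast_le.2 h))]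

lemma second_diff_mem_Icc_of_monotone_deriv {f f' : ℝ → ℝ} (hf : ∀ x, HasDerivAt f (f' x) x)
    (hf' : Monotone f') (a : ℝ) :
    f (a + 1) + f (a - 1) - 2 * f a ∈ Set.Icc 0 (f' (a + 1) - f' (a - 1)) := by
  have hcont : Continuous f := continuous_iff_continuousAt.2 fun x ↦ (hf x).continuousAt
  obtain ⟨c₁, hc₁, e₁⟩ := exists_hasDerivAt_eq_slope f f' (lt_add_one a) hcont.continuousOn
    fun x _ ↦ hf x
  obtain ⟨c₂, hc₂, e₂⟩ := exists_hasDerivAt_eq_slope f f' (sub_one_lt a) hcont.continuousOn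
    fun x _ ↦ hf x
  rw [add_sub_cancel_left, div_one] at e₁
  rw [sub_sub_cancel, div_one] at e₂
  constructor <;>
    linarith [hf' hc₂.1.le, hf' (hc₂.2.trans hc₁.1).le, hf' hc₁.2.le]

lemma fgnCov_three_quarters_sq_le (m : ℕ) : fgnCov (3 / 4) m ^ 2 ≤ 9 / 4 / (m + 1) := by
  rcases Nat.eq_zero_or_pos m with rfl | hm
  · norm_num [fgnCov_zero]
  have hm : (1 : ℝ) ≤ m := by exact_mod_cast hm
  have hf (x : ℝ) : HasDerivAt (fun x : ℝ ↦ x ^ (3 / 2 : ℝ)) (3 / 2 * √x) x := by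
    convert Real.hasDerivAt_rpow_const (x := x) (Or.inr (by norm_num : (1 : ℝ) ≤ 3 / 2)) using 2
    rw [Real.sqrt_eq_rpow]; norm_num
  have hf' : Monotone fun x ↦ 3 / 2 * √x := fun x y hxy ↦ by
    dsimp only; gcongr
  obtain ⟨hρ0, hρ1⟩ := second_diff_mem_Icc_of_monotone_deriv hf hf' m
  set ρ := fgnCov (3 / 4) m with hρ
  have hρ' : 2 * ρ = (m + 1 : ℝ) ^ (3 / 2 : ℝ) + (m - 1 : ℝ) ^ (3 / 2 : ℝ)
      - 2 * (m : ℝ) ^ (3 / 2 : ℝ) := by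
    rw [hρ, fgnCov, abs_of_nonneg (by linarith), abs_of_nonneg (by linarith),
      abs_of_nonneg (by linarith)]
    norm_num
    ring
  set s := √(m + 1 : ℝ)
  set t := √(m - 1 : ℝ)
  have hs : s ^ 2 = m + 1 := Real.sq_sqrt (by linarith)
  have ht : t ^ 2 = m - 1 := Real.sq_sqrt (by linarith)
  have ht0 : 0 ≤ t := Real.sqrt_nonneg _
  have hts : t ≤ s := Real.sqrt_le_sqrt (by linarith)
  -- `ρ ≤ (3/4) (s - t)` and `(s - t) s ≤ s² - t² = 2`, so `ρ s ≤ 3/2`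
  have hρs : ρ * s ≤ 3 / 2 := by nlinarith
  rw [le_div_iff₀ (by linarith), ← hs]
  nlinarith [mul_nonneg (by linarith : 0 ≤ ρ) (ht0.trans hts)]

lemma sum_range_fgnCov_sq_le (n : ℕ) :
    ∑ m ∈ Finset.range n, fgnCov (3 / 4) m ^ 2 ≤ 9 / 4 * (1 + log n) := by
  calc ∑ m ∈ Finset.range n, fgnCov (3 / 4) m ^ 2
      ≤ ∑ m ∈ Finset.range n, 9 / 4 / ((m : ℝ) + 1) :=
        Finset.sum_le_sum fun m _ ↦ fgnCov_three_quarters_sq_le m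
    _ = 9 / 4 * harmonic n := by
        simp [harmonic, Finset.mul_sum, div_eq_mul_inv]
    _ ≤ 9 / 4 * (1 + log n) := by
        gcongr
        exact harmonic_le_one_add_log n

lemma sum_sum_fgnCov_sq_le (n : ℕ) :
    ∑ j ∈ Finset.range n, ∑ k ∈ Finset.range n, fgnCov (3 / 4) (Nat.dist j k) ^ 2 ≤
      9 / 2 * n * (1 + log n) := by
  calc ∑ j ∈ Finset.range n, ∑ k ∈ Finset.range n, fgnCov (3 / 4) (Nat.dist j k) ^ 2
      ≤ ∑ _j ∈ Finset.range n, 2 • ∑ m ∈ Finset.range n, fgnCov (3 / 4) m ^ 2 :=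
        Finset.sum_le_sum fun j hj ↦ Finset.sum_range_natDist_le (fun m ↦ fgnCov (3 / 4) m ^ 2)
          (fun m ↦ sq_nonneg _) (Finset.mem_range.1 hj)
    _ = n * (2 * ∑ m ∈ Finset.range n, fgnCov (3 / 4) m ^ 2) := by simp
    _ ≤ n * (2 * (9 / 4 * (1 + log n))) := by gcongr; exact sum_range_fgnCov_sq_le n
    _ = 9 / 2 * n * (1 + log n) := by ring

end Autocovariance

section FractionalBrownianMotion

variable {Ω : Type*} [MeasurableSpace Ω] {P : Measure Ω} {H : ℝ} {β : ℝ → Ω → ℝ}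

def fgn (β : ℝ → Ω → ℝ) (k : ℕ) (ω : Ω) : ℝ := β ((k : ℝ) + 1) ω - β (k : ℝ) ω

namespace IsFBM

lemma exists_hasLaw_sum (hβ : IsFBM P H β) {n : ℕ} (c t : Fin n → ℝ) :
    ∃ v : ℝ≥0, HasLaw (fun ω ↦ ∑ i, c i * β (t i) ω) (gaussianReal 0 v) P := by
  obtain ⟨v, hv⟩ := hβ.2.1 n c t
  exact ⟨v, ⟨(Finset.measurable_sum _ fun i _ ↦ (hβ.1 (t i)).const_mul (c i)).aemeasurable, hv⟩⟩

lemma isCenteredGaussianPair (hβ : IsFBM P H β) (s t : ℝ) :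
    IsCenteredGaussianPair (β s) (β t) P := fun a b ↦ by
  simpa [Fin.sum_univ_two] using hβ.exists_hasLaw_sum ![a, b] ![s, t]

lemma isCenteredGaussianPair_fgn (hβ : IsFBM P H β) (j k : ℕ) :
    IsCenteredGaussianPair (fgn β j) (fgn β k) P := fun a b ↦ by
  obtain ⟨v, hv⟩ := hβ.exists_hasLaw_sum ![a, -a, b, -b] ![(j : ℝ) + 1, j, (k : ℝ) + 1, k]
  refine ⟨v, hv.congr (ae_of_all _ fun ω ↦ ?_)⟩
  simp only [fgn, Fin.sum_univ_four, Matrix.cons_val]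
  ring

lemma integral_increment_mul (hβ : IsFBM P H β) (s t : ℝ) :
    ∫ ω, (β (s + 1) ω - β s ω) * (β (t + 1) ω - β t ω) ∂P = fgnCov H (s - t) := by
  have hint (a b : ℝ) := (hβ.isCenteredGaussianPair a b).integrable_mul
  calc ∫ ω, (β (s + 1) ω - β s ω) * (β (t + 1) ω - β t ω) ∂P
      = ∫ ω, (β (s + 1) ω * β (t + 1) ω - β (s + 1) ω * β t ω)
          - (β s ω * β (t + 1) ω - β s ω * β t ω) ∂P := by
        congr 1; ext ω; ring
    _ = (∫ ω, β (s + 1) ω * β (t + 1) ω ∂P - ∫ ω, β (s + 1) ω * β t ω ∂P)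
          - (∫ ω, β s ω * β (t + 1) ω ∂P - ∫ ω, β s ω * β t ω ∂P) := by
        rw [integral_sub (by fun_prop) (by fun_prop), integral_sub (hint _ _) (hint _ _),
          integral_sub (hint _ _) (hint _ _)]
    _ = fgnCov H (s - t) := by
        rw [hβ.2.2, hβ.2.2, hβ.2.2, hβ.2.2, show s + 1 - (t + 1) = s - t by ring,
          show s + 1 - t = s - t + 1 by ring, show s - (t + 1) = s - t - 1 by ring, fgnCov]
        ring

lemma integral_fgn_mul (hβ : IsFBM P H β) (j k : ℕ) :
    ∫ ω, fgn β j ω * fgn β k ω ∂P = fgnCov H (Nat.dist j k) := by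
  rw [Nat.cast_dist_eq_abs, fgnCov_abs]
  exact hβ.integral_increment_mul j k

lemma integral_fgn_sq_sub_one_mul [IsProbabilityMeasure P] (hβ : IsFBM P H β) (hH : H ≠ 0)
    (j k : ℕ) :
    ∫ ω, (fgn β j ω ^ 2 - 1) * (fgn β k ω ^ 2 - 1) ∂P = 2 * fgnCov H (Nat.dist j k) ^ 2 := by
  have hvar (i : ℕ) : ∫ ω, fgn β i ω ^ 2 ∂P = 1 := by
    simpa [← sq, fgnCov_zero hH] using hβ.integral_fgn_mul i i
  have h := (hβ.isCenteredGaussianPair_fgn j k).integral_sq_sub_mul_sq_sub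
  simpa only [hvar, hβ.integral_fgn_mul] using h

end IsFBM

end FractionalBrownianMotion

/-- **Variance bound for quadratic variations of fBm, `H = 3/4`:**
`E | n⁻¹ ∑_{k<n} (|β_{k+1} - β_k|² - 1) |² ≤ c_H / n`. -/
theorem stmt5 {Ω : Type*} [MeasurableSpace Ω] (P : Measure Ω) [IsProbabilityMeasure P]
    (H : ℝ) (hH : H = 3 / 4) (β : ℝ → Ω → ℝ) (hβ : IsFBM P H β) :
    ∃ c : ℝ, 0 < c ∧ ∀ n : ℕ, 1 < n →
      ∫ ω, ((1 / (n : ℝ)) * ∑ k ∈ Finset.range n,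
          ((β ((k : ℝ) + 1) ω - β (k : ℝ) ω) ^ 2 - 1)) ^ 2 ∂P ≤ c * Real.log n / n := by
  subst hH
  refine ⟨23, by norm_num, fun n hn ↦ ?_⟩
  have hlog : log 2 ≤ log n := log_le_log (by norm_num) (by exact_mod_cast hn)
  calc ∫ ω, ((1 / (n : ℝ)) * ∑ k ∈ Finset.range n, (fgn β k ω ^ 2 - 1)) ^ 2 ∂P
      = (1 / (n : ℝ)) ^ 2 * ∑ j ∈ Finset.range n, ∑ k ∈ Finset.range n,
          ∫ ω, (fgn β j ω ^ 2 - 1) * (fgn β k ω ^ 2 - 1) ∂P := by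
        simp_rw [mul_pow]
        rw [integral_const_mul, integral_sq_finsetSum _
          fun j _ k _ ↦ (hβ.isCenteredGaussianPair_fgn j k).integrable_sq_sub_mul_sq_sub 1 1]
    _ = (1 / (n : ℝ)) ^ 2 * (2 * ∑ j ∈ Finset.range n, ∑ k ∈ Finset.range n,
          fgnCov (3 / 4) (Nat.dist j k) ^ 2) := by
        simp_rw [hβ.integral_fgn_sq_sub_one_mul (by norm_num), Finset.mul_sum]
    _ ≤ (1 / (n : ℝ)) ^ 2 * (2 * (9 / 2 * n * (1 + log n))) := by
        gcongr; exact sum_sum_fgnCov_sq_le n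
    _ = 9 * (1 + log n) / n := by field_simp
    _ ≤ 23 * log n / n := by gcongr ?_ / _; linarith [log_two_gt_d9]
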